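/- If the hypertangent cone Ha(F, x̄) is nonempty then the Clarke cone Cl(F, x̄) is contained in the closure of Ha(F, x̄). -/

import Mathlib

open Filter Topology

variable {X : Type*} [AddCommGroup X] [Module ℝ X] [TopologicalSpace X]
  [IsTopologicalAddGroup X] [ContinuousSMul ℝ X]

/-- The Hadamard (hypertangent) cone. -/
def Ha (F : Set X) (xbar : X) : Set X :=
  {h | ∃ U ∈ nhds xbar, ∃ W ∈ nhds h, ∃ lam > (0:ℝ),
    ∀ x' ∈ F ∩ U, ∀ lam' : ℝ, 0 < lam' → lam' ≤ lam → ∀ w ∈ W, x' + lam' • w ∈ F}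

/-- The Clarke tangent cone. -/
def Cl (F : Set X) (xbar : X) : Set X :=
  {h | ∀ V ∈ nhds (0:X), ∃ U ∈ nhds xbar, ∃ lam > (0:ℝ),
    ∀ x' ∈ F ∩ U, ∀ lam' : ℝ, 0 < lam' → lam' ≤ lam →
      ∃ h', h' - h ∈ V ∧ x' + lam' • h' ∈ F}

/-!
For `h₀ ∈ Ha F xbar` and `k ∈ Cl F xbar`, the directions `t • h₀ + k` lie in `Ha F xbar` for every
`t > 0`, because `Ha` is a cone and `Ha + Cl ⊆ Ha`, and they tend to `k` as `t → 0⁺`.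

For `Ha + Cl ⊆ Ha`: given `x' ∈ F` near `xbar`, small `t > 0` and `w` near `h + k`, the Clarke
property supplies `k'` near `k` with `x' + t • k' ∈ F`, a point still near `xbar`; then
`x' + t • w = (x' + t • k') + t • (w - k')` with `w - k'` near `h`, so hypertangency of `h` applies.
Both closeness conditions follow at once from continuity of
`(x', t, w, k' - k) ↦ (x' + t • k', t, w - k')`.
-/

section

variable {F : Set X} {xbar : X}

omit [IsTopologicalAddGroup X] [ContinuousSMul ℝ X] in
theorem mem_Ha_iff_eventually {h : X} :
    h ∈ Ha F xbar ↔ ∀ᶠ p : (X × ℝ) × X in (𝓝 xbar ×ˢ 𝓝[>] 0) ×ˢ 𝓝 h,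
      p.1.1 ∈ F → p.1.1 + p.1.2 • p.2 ∈ F := by
  constructor
  · rintro ⟨U, hU, W, hW, lam, hlam, hP⟩
    filter_upwards [prod_mem_prod (prod_mem_prod hU (Ioc_mem_nhdsGT hlam)) hW]
    rintro ⟨⟨x, t⟩, w⟩ ⟨⟨hx, ht⟩, hw⟩ hxF
    exact hP x ⟨hxF, hx⟩ t ht.1 ht.2 w hw
  · intro hev
    obtain ⟨S, hS, W, hW, hSW⟩ := mem_prod_iff.1 hev
    obtain ⟨U, hU, T, hT, hUT⟩ := mem_prod_iff.1 hS
    obtain ⟨lam, hlam, hT⟩ := mem_nhdsGT_iff_exists_Ioc_subset.1 hT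
    refine ⟨U, hU, W, hW, lam, hlam, ?_⟩
    rintro x ⟨hxF, hx⟩ t ht₀ ht w hw
    exact hSW (a := ((x, t), w)) ⟨hUT ⟨hx, hT ⟨ht₀, ht⟩⟩, hw⟩ hxF

omit [IsTopologicalAddGroup X] [ContinuousSMul ℝ X] in
theorem eventually_of_mem_Cl {k : X} (hk : k ∈ Cl F xbar) {V : Set X} (hV : V ∈ 𝓝 0) :
    ∀ᶠ p : X × ℝ in 𝓝 xbar ×ˢ 𝓝[>] 0,
      p.1 ∈ F → ∃ k', k' - k ∈ V ∧ p.1 + p.2 • k' ∈ F := by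
  obtain ⟨U, hU, lam, hlam, hP⟩ := hk V hV
  filter_upwards [prod_mem_prod hU (Ioc_mem_nhdsGT hlam)]
  rintro ⟨x, t⟩ ⟨hx, ht⟩ hxF
  exact hP x ⟨hxF, hx⟩ t ht.1 ht.2

theorem tendsto_mul_const_nhdsGT_zero {c : ℝ} (hc : 0 < c) :
    Tendsto (fun t : ℝ => t * c) (𝓝[>] 0) (𝓝[>] 0) :=
  tendsto_nhdsWithin_of_tendsto_nhds_of_eventually_within _
    (((continuous_mul_const c).tendsto' 0 0 (zero_mul c)).mono_left nhdsWithin_le_nhds)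
    (eventually_nhdsWithin_of_forall fun _ ht => mul_pos ht hc)

omit [IsTopologicalAddGroup X] in
theorem smul_mem_Ha {h : X} {c : ℝ} (hc : 0 < c) (hh : h ∈ Ha F xbar) :
    c • h ∈ Ha F xbar := by
  rw [mem_Ha_iff_eventually]
  have hmap : Tendsto (fun p : (X × ℝ) × X => ((p.1.1, p.1.2 * c), c⁻¹ • p.2))
      ((𝓝 xbar ×ˢ 𝓝[>] 0) ×ˢ 𝓝 (c • h)) ((𝓝 xbar ×ˢ 𝓝[>] 0) ×ˢ 𝓝 h) :=
    ((tendsto_fst.comp tendsto_fst).prodMk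
      ((tendsto_mul_const_nhdsGT_zero hc).comp (tendsto_snd.comp tendsto_fst))).prodMk
      (((continuous_const_smul c⁻¹).tendsto' (c • h) h (inv_smul_smul₀ hc.ne' h)).comp
        tendsto_snd)
  filter_upwards [hmap.eventually (mem_Ha_iff_eventually.1 hh)]
  rintro ⟨⟨x, t⟩, w⟩ hxtw hxF
  simpa [smul_smul, mul_assoc, hc.ne'] using hxtw hxF

theorem add_mem_Ha {h k : X} (hh : h ∈ Ha F xbar) (hk : k ∈ Cl F xbar) :
    h + k ∈ Ha F xbar := by
  have hmap : Tendsto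
      (fun q : ((X × ℝ) × X) × X => ((q.1.1.1 + q.1.1.2 • (k + q.2), q.1.1.2), q.1.2 - k - q.2))
      (((𝓝 xbar ×ˢ 𝓝[>] 0) ×ˢ 𝓝 (h + k)) ×ˢ 𝓝 0) ((𝓝 xbar ×ˢ 𝓝[>] 0) ×ˢ 𝓝 h) := by
    have ht : Tendsto (fun q : ((X × ℝ) × X) × X => q.1.1.2)
        (((𝓝 xbar ×ˢ 𝓝[>] 0) ×ˢ 𝓝 (h + k)) ×ˢ 𝓝 0) (𝓝[>] 0) :=
      tendsto_snd.comp (tendsto_fst.comp tendsto_fst)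
    refine ((?_ : Tendsto _ _ _).prodMk ht).prodMk ?_
    · simpa using (tendsto_fst.comp (tendsto_fst.comp tendsto_fst)).add
        ((ht.mono_right nhdsWithin_le_nhds).smul (tendsto_const_nhds.add tendsto_snd))
    · simpa using (((tendsto_snd.comp tendsto_fst).sub_const k).sub tendsto_snd :
        Tendsto _ (((𝓝 xbar ×ˢ 𝓝[>] (0 : ℝ)) ×ˢ 𝓝 (h + k)) ×ˢ 𝓝 (0 : X)) (𝓝 (h + k - k - 0)))
  obtain ⟨P, hP, Q, hQ, hPQ⟩ :=
    eventually_prod_iff.1 (hmap.eventually (mem_Ha_iff_eventually.1 hh))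
  rw [mem_Ha_iff_eventually]
  filter_upwards [hP, (eventually_of_mem_Cl hk hQ).prod_inl (𝓝 (h + k))]
  rintro ⟨⟨x, t⟩, w⟩ hxtw hkx hxF
  obtain ⟨k', hk'Q, hk'F⟩ := hkx hxF
  have hstep := hPQ hxtw hk'Q
  rw [sub_sub, add_sub_cancel] at hstep
  have hsplit : x + t • k' + t • (w - k') = x + t • w := by rw [smul_sub]; abel
  exact hsplit ▸ hstep hk'F

end

theorem cl_subset_closure_ha (F : Set X) (xbar : X) (hne : (Ha F xbar).Nonempty) :
    Cl F xbar ⊆ closure (Ha F xbar) := by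
  obtain ⟨h₀, hh₀⟩ := hne
  intro k hk
  have htend : Tendsto (fun t : ℝ => t • h₀ + k) (𝓝[>] 0) (𝓝 k) := by
    simpa using (((tendsto_id (x := 𝓝 (0 : ℝ))).smul_const h₀).add_const k).mono_left
      nhdsWithin_le_nhds
  exact mem_closure_of_tendsto htend
    (eventually_nhdsWithin_of_forall fun _ ht => add_mem_Ha (smul_mem_Ha ht hh₀) hk)
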